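/- arXiv:2511.00220 — 7 statements merged into one kernel-verified Lean document; each statement's English description precedes it below -/
import Mathlib

section
/- Let θ_1, …, θ_N ∈ ℝ^d, set ψ = Σ_{i=1}^N w_i θ_i and g = Σ_{i=1}^N w_i ∇L_i(θ_i), and for a stepsize 0 < η ≤ 1/(4L) set ψ⁺ = ψ − η g. Then ‖ψ⁺ − θ*‖² ≤ (1 − ημ)‖ψ − θ*‖² + 6Lη²Δ* + 2 Σ_{i=1}^N w_i ‖ψ − θ_i‖². (Paper's Lemma 1.) -/
open scoped BigOperators RealInnerProductSpace

/-!
Expand `‖ψ - η g - θ*‖² = ‖ψ - θ*‖² - 2η⟪ψ - θ*, g⟫ + η²‖g‖²` and bound the last two terms expert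
by expert. Splitting `⟪ψ - θ*, ∇Lᵢ(θᵢ)⟫` through `θᵢ`, strong convexity at `θᵢ` yields the
contraction and Young's inequality the dispersion `‖ψ - θᵢ‖²`. Smoothness bounds `‖∇Lᵢ‖²` by `2L`
times the suboptimality `Lᵢ - Lᵢ(θᵢ*)`; convexity at `ψ` trades the suboptimality at `θᵢ` for the
one at `ψ`, again at the cost of `‖ψ - θᵢ‖²`, and after weighting the latter dominates `Δ*` because
`θ*` minimises `L`. Jensen's inequality turns the weighted averages back into `‖g‖²` and
`‖ψ - θ*‖²`.
-/

section

variable {E : Type*} [NormedAddCommGroup E] [InnerProductSpace ℝ E]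

theorem norm_sum_smul_sq_le {ι : Type*} (s : Finset ι) {w : ι → ℝ} (hw₀ : ∀ i ∈ s, 0 ≤ w i)
    (hw₁ : ∑ i ∈ s, w i = 1) (v : ι → E) :
    ‖∑ i ∈ s, w i • v i‖ ^ 2 ≤ ∑ i ∈ s, w i * ‖v i‖ ^ 2 :=
  ((convexOn_norm convex_univ).pow (fun _ _ => norm_nonneg _) 2).map_sum_le hw₀ hw₁
    fun _ _ => Set.mem_univ _

theorem neg_two_mul_inner_le (η : ℝ) (u v : E) :
    -(2 * η * ⟪u, v⟫) ≤ ‖u‖ ^ 2 + η ^ 2 * ‖v‖ ^ 2 := by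
  have h := norm_add_sq_real u (η • v)
  rw [real_inner_smul_right, norm_smul, mul_pow, Real.norm_eq_abs, sq_abs] at h
  linarith [sq_nonneg ‖u + η • v‖]

theorem norm_sq_le_of_quadratic_upper_bound {f : E → ℝ} {L : ℝ} (hL : 0 < L) {x g m : E}
    (hsmooth : ∀ y, f y ≤ f x + ⟪g, y - x⟫ + L / 2 * ‖y - x‖ ^ 2) (hm : ∀ y, f m ≤ f y) :
    ‖g‖ ^ 2 ≤ 2 * L * (f x - f m) := by
  have h := (hm _).trans (hsmooth (x - L⁻¹ • g))
  rw [sub_sub_cancel_left, inner_neg_right, norm_neg, real_inner_smul_right, norm_smul,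
    real_inner_self_eq_norm_sq, Real.norm_eq_abs, abs_inv, abs_of_pos hL] at h
  have hquad : L⁻¹ * ‖g‖ ^ 2 - L / 2 * (L⁻¹ * ‖g‖) ^ 2 = ‖g‖ ^ 2 / (2 * L) := by
    field_simp
    ring
  have : ‖g‖ ^ 2 / (2 * L) ≤ f x - f m := by linarith
  rwa [div_le_iff₀ (by positivity), mul_comm] at this

theorem gradient_step_terms_le [CompleteSpace E] {f : E → ℝ} {L μ η : ℝ} (hL : 0 < L)
    (hμ : 0 ≤ μ) (hη : 0 ≤ η) (hLη : L * η ≤ 1 / 4)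
    (hsmooth : ∀ x y, f y ≤ f x + ⟪gradient f x, y - x⟫ + L / 2 * ‖y - x‖ ^ 2)
    (hconv : ∀ x y, f x + ⟪gradient f x, y - x⟫ + μ / 2 * ‖y - x‖ ^ 2 ≤ f y)
    {m : E} (hm : ∀ y, f m ≤ f y) (x ψ z : E) :
    -(2 * η * ⟪ψ - z, gradient f x⟫) + η ^ 2 * ‖gradient f x‖ ^ 2 ≤
      2 * ‖ψ - x‖ ^ 2 - η * μ * ‖x - z‖ ^ 2 + 2 * η * (f z - f m)
        - 2 * η * (1 - 3 * L * η) * (f ψ - f m) := by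
  have hgrad_x := norm_sq_le_of_quadratic_upper_bound hL (hsmooth x) hm
  have hgrad_ψ := norm_sq_le_of_quadratic_upper_bound hL (hsmooth ψ) hm
  have h_at_x : -(2 * η * ⟪ψ - z, gradient f x⟫) ≤ ‖ψ - x‖ ^ 2 + η ^ 2 * ‖gradient f x‖ ^ 2
      - 2 * η * (f x - f z) - η * μ * ‖x - z‖ ^ 2 := by
    have hsc := hconv x z
    rw [← neg_sub x z, inner_neg_right, norm_neg, real_inner_comm] at hsc
    have := mul_le_mul_of_nonneg_left hsc (by positivity : (0 : ℝ) ≤ 2 * η)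
    rw [← sub_add_sub_cancel ψ x z, inner_add_left]
    linarith [neg_two_mul_inner_le η (ψ - x) (gradient f x)]
  have h_at_ψ : 2 * η * (f ψ - f x) ≤ ‖ψ - x‖ ^ 2 + 2 * L * η ^ 2 * (f ψ - f m) := by
    have hcv := hconv ψ x
    have hyoung := neg_two_mul_inner_le η (x - ψ) (gradient f ψ)
    rw [real_inner_comm] at hcv
    rw [norm_sub_rev] at hcv hyoung
    have := mul_le_mul_of_nonneg_left hcv (by positivity : (0 : ℝ) ≤ 2 * η)
    linarith [hyoung,
      mul_le_mul_of_nonneg_left hgrad_ψ (sq_nonneg η),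
      mul_nonneg (mul_nonneg hη hμ) (sq_nonneg ‖ψ - x‖)]
  have hcoef : 0 ≤ 1 - 2 * L * η := by linarith
  -- weight `h_at_ψ` by `1 - 2Lη`; then `(1 - 2Lη)(1 - Lη) ≥ 1 - 3Lη` gives the last coefficient
  linarith [mul_le_mul_of_nonneg_left h_at_ψ hcoef,
    mul_le_mul_of_nonneg_left hgrad_x (sq_nonneg η),
    mul_nonneg (mul_nonneg hL.le hη) (sq_nonneg ‖ψ - x‖),
    mul_nonneg (mul_nonneg (sq_nonneg (L * η)) hη) (sub_nonneg.2 (hm ψ))]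

theorem sum_gradient_step_terms_le [CompleteSpace E] {ι : Type*} (s : Finset ι)
    {f : ι → E → ℝ} {L μ η : ℝ} (hL : 0 < L) (hμ : 0 ≤ μ) (hη : 0 ≤ η) (hLη : L * η ≤ 1 / 4)
    (hsmooth : ∀ i x y, f i y ≤ f i x + ⟪gradient (f i) x, y - x⟫ + L / 2 * ‖y - x‖ ^ 2)
    (hconv : ∀ i x y, f i x + ⟪gradient (f i) x, y - x⟫ + μ / 2 * ‖y - x‖ ^ 2 ≤ f i y)
    {m : ι → E} (hm : ∀ i y, f i (m i) ≤ f i y) {w : ι → ℝ} (hw : ∀ i ∈ s, 0 ≤ w i)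
    {z : E} (hz : ∀ y, ∑ i ∈ s, w i * f i z ≤ ∑ i ∈ s, w i * f i y) (x : ι → E) (ψ : E) :
    -(2 * η * ⟪ψ - z, ∑ i ∈ s, w i • gradient (f i) (x i)⟫)
        + η ^ 2 * ∑ i ∈ s, w i * ‖gradient (f i) (x i)‖ ^ 2 ≤
      2 * ∑ i ∈ s, w i * ‖ψ - x i‖ ^ 2 - η * μ * ∑ i ∈ s, w i * ‖x i - z‖ ^ 2
        + 6 * L * η ^ 2 * (∑ i ∈ s, w i * f i z - ∑ i ∈ s, w i * f i (m i)) := by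
  have hκ : 0 ≤ 2 * η * (1 - 3 * L * η) := mul_nonneg (by positivity) (by linarith)
  calc -(2 * η * ⟪ψ - z, ∑ i ∈ s, w i • gradient (f i) (x i)⟫)
        + η ^ 2 * ∑ i ∈ s, w i * ‖gradient (f i) (x i)‖ ^ 2
      = ∑ i ∈ s, w i * (-(2 * η * ⟪ψ - z, gradient (f i) (x i)⟫)
          + η ^ 2 * ‖gradient (f i) (x i)‖ ^ 2) := by
        simp only [inner_sum, real_inner_smul_right, Finset.mul_sum, ← Finset.sum_neg_distrib,
          ← Finset.sum_add_distrib]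
        exact Finset.sum_congr rfl fun i _ => by ring
    _ ≤ ∑ i ∈ s, w i * (2 * ‖ψ - x i‖ ^ 2 - η * μ * ‖x i - z‖ ^ 2
          + 2 * η * (f i z - f i (m i)) - 2 * η * (1 - 3 * L * η) * (f i ψ - f i (m i))) :=
        Finset.sum_le_sum fun i hi => mul_le_mul_of_nonneg_left
          (gradient_step_terms_le hL hμ hη hLη (hsmooth i) (hconv i) (hm i) (x i) ψ z) (hw i hi)
    _ = 2 * ∑ i ∈ s, w i * ‖ψ - x i‖ ^ 2 - η * μ * ∑ i ∈ s, w i * ‖x i - z‖ ^ 2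
          + 2 * η * (∑ i ∈ s, w i * f i z - ∑ i ∈ s, w i * f i (m i))
          - 2 * η * (1 - 3 * L * η) * (∑ i ∈ s, w i * f i ψ - ∑ i ∈ s, w i * f i (m i)) := by
        simp only [Finset.mul_sum, ← Finset.sum_sub_distrib, ← Finset.sum_add_distrib]
        exact Finset.sum_congr rfl fun i _ => by ring
    _ ≤ _ := by linarith [mul_le_mul_of_nonneg_left (hz ψ) hκ]

end

theorem stmt0_general {d N : ℕ}
    (Lf : Fin N → EuclideanSpace ℝ (Fin d) → ℝ)
    (Lc μ : ℝ) (hμ : 0 < μ) (hμL : μ ≤ Lc)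
    (hsmooth : ∀ i x y, Lf i y ≤ Lf i x + ⟪gradient (Lf i) x, y - x⟫ + Lc / 2 * ‖y - x‖ ^ 2)
    (hconv : ∀ i x y, Lf i y ≥ Lf i x + ⟪gradient (Lf i) x, y - x⟫ + μ / 2 * ‖y - x‖ ^ 2)
    (w : Fin N → ℝ) (hw : ∀ i, w i ∈ Set.Ioo (0 : ℝ) 1) (hw1 : ∑ i, w i = 1)
    (θstar : EuclideanSpace ℝ (Fin d))
    (hθstar : ∀ x, ∑ i, w i * Lf i θstar ≤ ∑ i, w i * Lf i x)
    (θistar : Fin N → EuclideanSpace ℝ (Fin d))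
    (hθistar : ∀ i x, Lf i (θistar i) ≤ Lf i x)
    (Δstar : ℝ)
    (hΔ : Δstar = (∑ i, w i * Lf i θstar) - ∑ i, w i * Lf i (θistar i))
    (θ : Fin N → EuclideanSpace ℝ (Fin d))
    (ψ g : EuclideanSpace ℝ (Fin d))
    (hψ : ψ = ∑ i, w i • θ i)
    (hg : g = ∑ i, w i • gradient (Lf i) (θ i))
    (η : ℝ) (hη : 0 < η) (hη' : η ≤ 1 / (4 * Lc)) :
    ‖ψ - η • g - θstar‖ ^ 2 ≤
      (1 - η * μ) * ‖ψ - θstar‖ ^ 2 + 6 * Lc * η ^ 2 * Δstar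
        + 2 * ∑ i, w i * ‖ψ - θ i‖ ^ 2 := by
  have hL : 0 < Lc := hμ.trans_le hμL
  have hLη : Lc * η ≤ 1 / 4 := by
    rw [le_div_iff₀ (by positivity)] at hη'
    linarith
  have hw₀ : ∀ i ∈ Finset.univ, 0 ≤ w i := fun i _ => (hw i).1.le
  have hexpand : ‖ψ - η • g - θstar‖ ^ 2
      = ‖ψ - θstar‖ ^ 2 - 2 * η * ⟪ψ - θstar, g⟫ + η ^ 2 * ‖g‖ ^ 2 := by
    rw [sub_right_comm, norm_sub_sq_real, real_inner_smul_right, norm_smul, mul_pow,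
      Real.norm_eq_abs, sq_abs, mul_assoc]
  have hg_le : ‖g‖ ^ 2 ≤ ∑ i, w i * ‖gradient (Lf i) (θ i)‖ ^ 2 :=
    hg ▸ norm_sum_smul_sq_le _ hw₀ hw1 _
  have hψ_le : ‖ψ - θstar‖ ^ 2 ≤ ∑ i, w i * ‖θ i - θstar‖ ^ 2 := by
    have hψ' : ψ - θstar = ∑ i, w i • (θ i - θstar) := by
      simp only [hψ, smul_sub, Finset.sum_sub_distrib, ← Finset.sum_smul, hw1, one_smul]
    exact hψ' ▸ norm_sum_smul_sq_le _ hw₀ hw1 _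
  have hterms := sum_gradient_step_terms_le Finset.univ hL hμ.le hη.le hLη hsmooth hconv
    hθistar hw₀ hθstar θ ψ
  rw [← hg, ← hΔ] at hterms
  linarith [mul_le_mul_of_nonneg_left hg_le (sq_nonneg η),
    mul_le_mul_of_nonneg_left hψ_le (mul_nonneg hη.le hμ.le)]

/-- Paper's Lemma 1: one averaged gradient step contracts the distance to the
multi-objective optimum, up to a `Δ*` term and the dispersion of the experts. -/
theorem stmt0 {d N : ℕ} (hN : 1 ≤ N)
    (Lf : Fin N → EuclideanSpace ℝ (Fin d) → ℝ)
    (Lc μ : ℝ) (hμ : 0 < μ) (hμL : μ ≤ Lc)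
    (hdiff : ∀ i, Differentiable ℝ (Lf i))
    (hsmooth : ∀ i x y, Lf i y ≤ Lf i x + ⟪gradient (Lf i) x, y - x⟫ + Lc / 2 * ‖y - x‖ ^ 2)
    (hconv : ∀ i x y, Lf i y ≥ Lf i x + ⟪gradient (Lf i) x, y - x⟫ + μ / 2 * ‖y - x‖ ^ 2)
    (w : Fin N → ℝ) (hw : ∀ i, w i ∈ Set.Ioo (0 : ℝ) 1) (hw1 : ∑ i, w i = 1)
    (θstar : EuclideanSpace ℝ (Fin d))
    (hθstar : ∀ x, ∑ i, w i * Lf i θstar ≤ ∑ i, w i * Lf i x)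
    (θistar : Fin N → EuclideanSpace ℝ (Fin d))
    (hθistar : ∀ i x, Lf i (θistar i) ≤ Lf i x)
    (Δstar : ℝ)
    (hΔ : Δstar = (∑ i, w i * Lf i θstar) - ∑ i, w i * Lf i (θistar i))
    (θ : Fin N → EuclideanSpace ℝ (Fin d))
    (ψ g : EuclideanSpace ℝ (Fin d))
    (hψ : ψ = ∑ i, w i • θ i)
    (hg : g = ∑ i, w i • gradient (Lf i) (θ i))
    (η : ℝ) (hη : 0 < η) (hη' : η ≤ 1 / (4 * Lc)) :
    ‖ψ - η • g - θstar‖ ^ 2 ≤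
      (1 - η * μ) * ‖ψ - θstar‖ ^ 2 + 6 * Lc * η ^ 2 * Δstar
        + 2 * ∑ i, w i * ‖ψ - θ i‖ ^ 2 :=
  stmt0_general Lf Lc μ hμ hμL hsmooth hconv w hw hw1 θstar hθstar θistar hθistar Δstar hΔ θ ψ g hψ
    hg η hη hη'
end

section
/- Let θ_1, …, θ_N ∈ ℝ^d, ψ = Σ_{i=1}^N w_i θ_i, and let η > 0. Then Σ_{i=1}^N w_i (L_i(θ_i) − L_i(θ*)) ≥ −Σ_{i=1}^N w_i ( ηL (L_i(ψ) − L_i(θ_i*)) + (1/(2η))‖θ_i − ψ‖² ) + (L(ψ) − L(θ*)). -/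
/-!
Fix an expert `i` and let `g = ∇Lᵢ(ψ)`. Convexity gives `Lᵢ(θᵢ) - Lᵢ(ψ) ≥ ⟪g, θᵢ - ψ⟫`, Young's
inequality bounds this below by `-(η/2)‖g‖² - ‖θᵢ - ψ‖²/(2η)`, and a gradient step from `ψ` shows,
by smoothness, that `‖g‖² ≤ 2L (Lᵢ(ψ) - Lᵢ(θᵢ*))`. Averaging these bounds with the weights `wᵢ`,
the terms `Lᵢ(θ*)` on both sides cancel.
-/

open scoped BigOperators RealInnerProductSpace

section

variable {F : Type*} [NormedAddCommGroup F] [InnerProductSpace ℝ F]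

theorem sq_norm_le_of_forall_le_add_inner_add_sq {f : F → ℝ} {x g : F} {L m : ℝ} (hL : 0 < L)
    (hsmooth : ∀ y, f y ≤ f x + ⟪g, y - x⟫ + L / 2 * ‖y - x‖ ^ 2) (hm : ∀ y, m ≤ f y) :
    ‖g‖ ^ 2 ≤ 2 * L * (f x - m) := by
  have hstep := hsmooth (x - L⁻¹ • g)
  have hinner : ⟪g, x - L⁻¹ • g - x⟫ = -(L⁻¹ * ‖g‖ ^ 2) := by
    rw [sub_sub_cancel_left, inner_neg_right, real_inner_smul_right, real_inner_self_eq_norm_sq]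
  have hnorm : ‖x - L⁻¹ • g - x‖ ^ 2 = L⁻¹ ^ 2 * ‖g‖ ^ 2 := by
    rw [sub_sub_cancel_left, norm_neg, norm_smul, Real.norm_of_nonneg (inv_pos.2 hL).le, mul_pow]
  have hdescent : f (x - L⁻¹ • g) ≤ f x - ‖g‖ ^ 2 / (2 * L) := by
    rw [hinner, hnorm] at hstep
    convert hstep using 1
    field_simp
    ring
  have := hm (x - L⁻¹ • g)
  have := (div_le_iff₀ (by positivity : 0 < 2 * L)).1 (by linarith : ‖g‖ ^ 2 / (2 * L) ≤ f x - m)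
  linarith

theorem neg_inner_le_young (g v : F) {η : ℝ} (hη : 0 < η) :
    -⟪g, v⟫ ≤ η / 2 * ‖g‖ ^ 2 + 1 / (2 * η) * ‖v‖ ^ 2 := by
  have hgv : -⟪g, v⟫ ≤ ‖g‖ * ‖v‖ := by
    simpa using real_inner_le_norm (-g) v
  have hamgm : ‖g‖ * ‖v‖ ≤ η / 2 * ‖g‖ ^ 2 + 1 / (2 * η) * ‖v‖ ^ 2 := by
    rw [← sub_nonneg]
    have hsq : η / 2 * ‖g‖ ^ 2 + 1 / (2 * η) * ‖v‖ ^ 2 - ‖g‖ * ‖v‖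
        = (η * ‖g‖ - ‖v‖) ^ 2 / (2 * η) := by
      field_simp
      ring
    rw [hsq]
    positivity
  exact hgv.trans hamgm

theorem neg_le_sub_of_smooth_of_convex {f : F → ℝ} {ψ θ g : F} {L m η : ℝ} (hL : 0 < L)
    (hη : 0 < η) (hsmooth : ∀ y, f y ≤ f ψ + ⟪g, y - ψ⟫ + L / 2 * ‖y - ψ‖ ^ 2)
    (hconv : f ψ + ⟪g, θ - ψ⟫ ≤ f θ) (hm : ∀ y, m ≤ f y) :
    -(η * L * (f ψ - m) + 1 / (2 * η) * ‖θ - ψ‖ ^ 2) ≤ f θ - f ψ := by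
  have hgrad := mul_le_mul_of_nonneg_left
    (sq_norm_le_of_forall_le_add_inner_add_sq hL hsmooth hm) (half_pos hη).le
  have hyoung := neg_inner_le_young g (θ - ψ) hη
  linarith

end

theorem stmt3_general {d N : ℕ}
    (Lf : Fin N → EuclideanSpace ℝ (Fin d) → ℝ)
    (Lc μ : ℝ) (hμ : 0 < μ) (hμL : μ ≤ Lc)
    (hsmooth : ∀ i x y, Lf i y ≤ Lf i x + ⟪gradient (Lf i) x, y - x⟫ + Lc / 2 * ‖y - x‖ ^ 2)
    (hconv : ∀ i x y, Lf i y ≥ Lf i x + ⟪gradient (Lf i) x, y - x⟫ + μ / 2 * ‖y - x‖ ^ 2)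
    (w : Fin N → ℝ) (hw : ∀ i, w i ∈ Set.Ioo (0 : ℝ) 1)
    (θstar : EuclideanSpace ℝ (Fin d))
    (θistar : Fin N → EuclideanSpace ℝ (Fin d))
    (hθistar : ∀ i x, Lf i (θistar i) ≤ Lf i x)
    (θ : Fin N → EuclideanSpace ℝ (Fin d))
    (ψ : EuclideanSpace ℝ (Fin d))
    (η : ℝ) (hη : 0 < η) :
    ∑ i, w i * (Lf i (θ i) - Lf i θstar) ≥
      -(∑ i, w i * (η * Lc * (Lf i ψ - Lf i (θistar i)) + 1 / (2 * η) * ‖θ i - ψ‖ ^ 2))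
        + ((∑ i, w i * Lf i ψ) - ∑ i, w i * Lf i θstar) := by
  have hexpert i : -(η * Lc * (Lf i ψ - Lf i (θistar i)) + 1 / (2 * η) * ‖θ i - ψ‖ ^ 2)
      ≤ Lf i (θ i) - Lf i ψ := by
    have hfirst : Lf i ψ + ⟪gradient (Lf i) ψ, θ i - ψ⟫ ≤ Lf i (θ i) := by
      have hμnorm : 0 ≤ μ / 2 * ‖θ i - ψ‖ ^ 2 := by positivity
      linarith [hconv i ψ (θ i)]
    exact neg_le_sub_of_smooth_of_convex (hμ.trans_le hμL) hη (hsmooth i ψ) hfirst (hθistar i)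
  have hsum := Finset.sum_le_sum fun i (_ : i ∈ Finset.univ) =>
    mul_le_mul_of_nonneg_left (hexpert i) (hw i).1.le
  simp only [mul_neg, mul_sub, Finset.sum_neg_distrib, Finset.sum_sub_distrib] at hsum ⊢
  linarith

/-- Lower bound on the weighted suboptimality of the experts in terms of the
suboptimality of the average ψ. -/
theorem stmt3 {d N : ℕ} (hN : 1 ≤ N)
    (Lf : Fin N → EuclideanSpace ℝ (Fin d) → ℝ)
    (Lc μ : ℝ) (hμ : 0 < μ) (hμL : μ ≤ Lc)
    (hdiff : ∀ i, Differentiable ℝ (Lf i))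
    (hsmooth : ∀ i x y, Lf i y ≤ Lf i x + ⟪gradient (Lf i) x, y - x⟫ + Lc / 2 * ‖y - x‖ ^ 2)
    (hconv : ∀ i x y, Lf i y ≥ Lf i x + ⟪gradient (Lf i) x, y - x⟫ + μ / 2 * ‖y - x‖ ^ 2)
    (w : Fin N → ℝ) (hw : ∀ i, w i ∈ Set.Ioo (0 : ℝ) 1) (hw1 : ∑ i, w i = 1)
    (θstar : EuclideanSpace ℝ (Fin d))
    (hθstar : ∀ x, ∑ i, w i * Lf i θstar ≤ ∑ i, w i * Lf i x)
    (θistar : Fin N → EuclideanSpace ℝ (Fin d))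
    (hθistar : ∀ i x, Lf i (θistar i) ≤ Lf i x)
    (θ : Fin N → EuclideanSpace ℝ (Fin d))
    (ψ : EuclideanSpace ℝ (Fin d)) (hψ : ψ = ∑ i, w i • θ i)
    (η : ℝ) (hη : 0 < η) :
    ∑ i, w i * (Lf i (θ i) - Lf i θstar) ≥
      -(∑ i, w i * (η * Lc * (Lf i ψ - Lf i (θistar i)) + 1 / (2 * η) * ‖θ i - ψ‖ ^ 2))
        + ((∑ i, w i * Lf i ψ) - ∑ i, w i * Lf i θstar) :=
  stmt3_general Lf Lc μ hμ hμL hsmooth hconv w hw θstar θistar hθistar θ ψ η hη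
end

section
/- Let θ_1, …, θ_N ∈ ℝ^d, ψ = Σ_{i=1}^N w_i θ_i, and let 0 < η ≤ 1/(4L). Then −2η(1 − 2ηL) Σ_{i=1}^N w_i (L_i(θ_i) − L_i(θ*)) ≤ 2η²L Δ* + Σ_{i=1}^N w_i ‖θ_i − ψ‖². -/
open scoped BigOperators RealInnerProductSpace

/-!
Fix the common point ψ. For each `i`, convexity of `Lᵢ` at `ψ` and Young's inequality give
`2η (Lᵢ ψ - Lᵢ θᵢ) ≤ η² ‖∇Lᵢ ψ‖² + ‖θᵢ - ψ‖²`, and `L`-smoothness bounds the gradient by the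
suboptimality gap, `‖∇Lᵢ ψ‖² ≤ 2L (Lᵢ ψ - Lᵢ θᵢ*)`. Averaging with the weights `wᵢ` and splitting
`L ψ - Σ wᵢ Lᵢ θᵢ* = (L ψ - L θ*) + Δ*`, the term `L ψ - L θ*` is nonnegative and enters with
the coefficient `2η²L - 2η ≤ 0`, so it can be dropped. This bounds `-2η Σ wᵢ (Lᵢ θᵢ - Lᵢ θ*)`,
and the factor `1 - 2ηL ∈ [0, 1]` only weakens it.
-/

section InnerProductSpace

variable {E : Type*} [NormedAddCommGroup E] [InnerProductSpace ℝ E]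

/-- Evaluate the quadratic upper bound at the gradient step `x - L⁻¹ • g`. -/
theorem norm_sq_le_two_mul_sub_of_quadratic_upper_bound {f : E → ℝ} {x g : E} {L m : ℝ}
    (hL : 0 < L) (hf : ∀ y, f y ≤ f x + ⟪g, y - x⟫ + L / 2 * ‖y - x‖ ^ 2)
    (hm : ∀ y, m ≤ f y) :
    ‖g‖ ^ 2 ≤ 2 * L * (f x - m) := by
  have hstep := hf (x - L⁻¹ • g)
  rw [sub_sub_cancel_left, inner_neg_right, real_inner_smul_right, real_inner_self_eq_norm_sq,
    norm_neg, norm_smul, mul_pow, Real.norm_eq_abs, abs_of_pos (inv_pos.2 hL)] at hstep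
  have hcoeff : -(L⁻¹ * ‖g‖ ^ 2) + L / 2 * (L⁻¹ ^ 2 * ‖g‖ ^ 2) = -((2 * L)⁻¹ * ‖g‖ ^ 2) := by
    field_simp
    ring
  have hgap : (2 * L)⁻¹ * ‖g‖ ^ 2 ≤ f x - m := by linarith [hm (x - L⁻¹ • g)]
  calc ‖g‖ ^ 2 = 2 * L * ((2 * L)⁻¹ * ‖g‖ ^ 2) := by field_simp
    _ ≤ 2 * L * (f x - m) := mul_le_mul_of_nonneg_left hgap (by positivity)

theorem two_mul_sub_le_of_add_inner_le {f : E → ℝ} {x y g : E} {η : ℝ} (hη : 0 ≤ η)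
    (h : f y + ⟪g, x - y⟫ ≤ f x) :
    2 * η * (f y - f x) ≤ η ^ 2 * ‖g‖ ^ 2 + ‖x - y‖ ^ 2 := by
  have hyoung : 0 ≤ ‖η • g + (x - y)‖ ^ 2 := sq_nonneg _
  rw [norm_add_sq_real, norm_smul, real_inner_smul_left, Real.norm_eq_abs, abs_of_nonneg hη]
    at hyoung
  nlinarith

theorem two_mul_sub_le_of_smooth_of_convex {f : E → ℝ} {x y g : E} {L m η : ℝ}
    (hL : 0 < L) (hη : 0 ≤ η) (hsmooth : ∀ z, f z ≤ f y + ⟪g, z - y⟫ + L / 2 * ‖z - y‖ ^ 2)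
    (hconv : f y + ⟪g, x - y⟫ ≤ f x) (hm : ∀ z, m ≤ f z) :
    2 * η * (f y - f x) ≤ 2 * η ^ 2 * L * (f y - m) + ‖x - y‖ ^ 2 := by
  have hgrad := norm_sq_le_two_mul_sub_of_quadratic_upper_bound hL hsmooth hm
  calc 2 * η * (f y - f x) ≤ η ^ 2 * ‖g‖ ^ 2 + ‖x - y‖ ^ 2 :=
        two_mul_sub_le_of_add_inner_le hη hconv
    _ ≤ η ^ 2 * (2 * L * (f y - m)) + ‖x - y‖ ^ 2 := by gcongr
    _ = 2 * η ^ 2 * L * (f y - m) + ‖x - y‖ ^ 2 := by ring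

end InnerProductSpace

/-- Averaging the per-index bounds: `a i`, `b i`, `c i` are the values of the `i`-th function at
its own point, at the common point and at the minimizer of the weighted sum, `m i` is its minimum. -/
theorem neg_two_mul_sum_sub_le {ι : Type*} (s : Finset ι) {w a b c m t : ι → ℝ} {η L : ℝ}
    (hη : 0 ≤ η) (hηL : η * L ≤ 1) (hw : ∀ i ∈ s, 0 ≤ w i)
    (hc : ∑ i ∈ s, w i * c i ≤ ∑ i ∈ s, w i * b i)
    (h : ∀ i ∈ s, 2 * η * (b i - a i) ≤ 2 * η ^ 2 * L * (b i - m i) + t i) :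
    -(2 * η) * ∑ i ∈ s, w i * (a i - c i) ≤
      2 * η ^ 2 * L * (∑ i ∈ s, w i * c i - ∑ i ∈ s, w i * m i) + ∑ i ∈ s, w i * t i := by
  have hsum := Finset.sum_le_sum fun i hi => mul_le_mul_of_nonneg_left (h i hi) (hw i hi)
  simp only [mul_add, mul_sub, Finset.sum_add_distrib, Finset.sum_sub_distrib,
    mul_left_comm (w _), ← Finset.mul_sum] at hsum ⊢
  have hdrop : 0 ≤ 2 * η * (1 - η * L) * (∑ i ∈ s, w i * b i - ∑ i ∈ s, w i * c i) := by
    have := sub_nonneg.2 hc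
    have := sub_nonneg.2 hηL
    positivity
  nlinarith

theorem stmt4_general {d N : ℕ}
    (Lf : Fin N → EuclideanSpace ℝ (Fin d) → ℝ)
    (Lc μ : ℝ) (hμ : 0 < μ) (hμL : μ ≤ Lc)
    (hsmooth : ∀ i x y, Lf i y ≤ Lf i x + ⟪gradient (Lf i) x, y - x⟫ + Lc / 2 * ‖y - x‖ ^ 2)
    (hconv : ∀ i x y, Lf i y ≥ Lf i x + ⟪gradient (Lf i) x, y - x⟫ + μ / 2 * ‖y - x‖ ^ 2)
    (w : Fin N → ℝ) (hw : ∀ i, w i ∈ Set.Ioo (0 : ℝ) 1)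
    (θstar : EuclideanSpace ℝ (Fin d))
    (hθstar : ∀ x, ∑ i, w i * Lf i θstar ≤ ∑ i, w i * Lf i x)
    (θistar : Fin N → EuclideanSpace ℝ (Fin d))
    (hθistar : ∀ i x, Lf i (θistar i) ≤ Lf i x)
    (Δstar : ℝ)
    (hΔ : Δstar = (∑ i, w i * Lf i θstar) - ∑ i, w i * Lf i (θistar i))
    (θ : Fin N → EuclideanSpace ℝ (Fin d))
    (ψ : EuclideanSpace ℝ (Fin d))
    (η : ℝ) (hη : 0 < η) (hη' : η ≤ 1 / (4 * Lc)) :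
    -(2 * η * (1 - 2 * η * Lc)) * ∑ i, w i * (Lf i (θ i) - Lf i θstar) ≤
      2 * η ^ 2 * Lc * Δstar + ∑ i, w i * ‖θ i - ψ‖ ^ 2 := by
  have hLc : 0 < Lc := hμ.trans_le hμL
  have hηLc : 4 * η * Lc ≤ 1 := by
    rw [le_div_iff₀ (by positivity)] at hη'
    linarith
  have hw0 : ∀ i ∈ Finset.univ, 0 ≤ w i := fun i _ => (hw i).1.le
  have hclient : ∀ i ∈ Finset.univ, 2 * η * (Lf i ψ - Lf i (θ i)) ≤
      2 * η ^ 2 * Lc * (Lf i ψ - Lf i (θistar i)) + ‖θ i - ψ‖ ^ 2 := fun i _ =>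
    two_mul_sub_le_of_smooth_of_convex hLc hη.le (hsmooth i ψ)
      ((le_add_of_nonneg_right (by positivity)).trans (hconv i ψ (θ i))) (hθistar i)
  have hgap := neg_two_mul_sum_sub_le Finset.univ hη.le (by nlinarith) hw0 (hθstar ψ) hclient
  rw [← hΔ] at hgap
  have hΔ0 : 0 ≤ Δstar := hΔ ▸ sub_nonneg.2
    (Finset.sum_le_sum fun i hi => mul_le_mul_of_nonneg_left (hθistar i θstar) (hw0 i hi))
  have hR : 0 ≤ 2 * η ^ 2 * Lc * Δstar + ∑ i, w i * ‖θ i - ψ‖ ^ 2 :=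
    add_nonneg (by positivity) (Finset.sum_nonneg fun i hi => mul_nonneg (hw0 i hi) (by positivity))
  calc -(2 * η * (1 - 2 * η * Lc)) * ∑ i, w i * (Lf i (θ i) - Lf i θstar)
      = (1 - 2 * η * Lc) * (-(2 * η) * ∑ i, w i * (Lf i (θ i) - Lf i θstar)) := by ring
    _ ≤ (1 - 2 * η * Lc) * (2 * η ^ 2 * Lc * Δstar + ∑ i, w i * ‖θ i - ψ‖ ^ 2) :=
        mul_le_mul_of_nonneg_left hgap (by nlinarith)
    _ ≤ 2 * η ^ 2 * Lc * Δstar + ∑ i, w i * ‖θ i - ψ‖ ^ 2 :=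
        mul_le_of_le_one_left hR (by nlinarith)

/-- −2η(1 − 2ηL) Σ wᵢ (Lᵢ(θᵢ) − Lᵢ(θ*)) ≤ 2η²L Δ* + Σ wᵢ ‖θᵢ − ψ‖². -/
theorem stmt4 {d N : ℕ} (hN : 1 ≤ N)
    (Lf : Fin N → EuclideanSpace ℝ (Fin d) → ℝ)
    (Lc μ : ℝ) (hμ : 0 < μ) (hμL : μ ≤ Lc)
    (hdiff : ∀ i, Differentiable ℝ (Lf i))
    (hsmooth : ∀ i x y, Lf i y ≤ Lf i x + ⟪gradient (Lf i) x, y - x⟫ + Lc / 2 * ‖y - x‖ ^ 2)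
    (hconv : ∀ i x y, Lf i y ≥ Lf i x + ⟪gradient (Lf i) x, y - x⟫ + μ / 2 * ‖y - x‖ ^ 2)
    (w : Fin N → ℝ) (hw : ∀ i, w i ∈ Set.Ioo (0 : ℝ) 1) (hw1 : ∑ i, w i = 1)
    (θstar : EuclideanSpace ℝ (Fin d))
    (hθstar : ∀ x, ∑ i, w i * Lf i θstar ≤ ∑ i, w i * Lf i x)
    (θistar : Fin N → EuclideanSpace ℝ (Fin d))
    (hθistar : ∀ i x, Lf i (θistar i) ≤ Lf i x)
    (Δstar : ℝ)
    (hΔ : Δstar = (∑ i, w i * Lf i θstar) - ∑ i, w i * Lf i (θistar i))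
    (θ : Fin N → EuclideanSpace ℝ (Fin d))
    (ψ : EuclideanSpace ℝ (Fin d)) (hψ : ψ = ∑ i, w i • θ i)
    (η : ℝ) (hη : 0 < η) (hη' : η ≤ 1 / (4 * Lc)) :
    -(2 * η * (1 - 2 * η * Lc)) * ∑ i, w i * (Lf i (θ i) - Lf i θstar) ≤
      2 * η ^ 2 * Lc * Δstar + ∑ i, w i * ‖θ i - ψ‖ ^ 2 :=
  stmt4_general Lf Lc μ hμ hμL hsmooth hconv w hw θstar hθstar θistar hθistar Δstar hΔ θ ψ η hη hη'
end

section
/- Let θ_1, …, θ_N ∈ ℝ^d, ψ = Σ_{i=1}^N w_i θ_i, g = Σ_{i=1}^N w_i ∇L_i(θ_i), and 0 < η ≤ 1/(4L). Then ‖ψ − ηg − θ*‖² ≤ (1 − ημ)‖ψ − θ*‖² + Σ_{i=1}^N w_i ‖ψ − θ_i‖² + 4η²L Σ_{i=1}^N w_i (L_i(θ_i) − L_i(θ_i*)) − 2η Σ_{i=1}^N w_i (L_i(θ_i) − L_i(θ*)). -/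
open scoped BigOperators RealInnerProductSpace

/-
Expand ‖(ψ - θ*) - η g‖² and split each client's inner product ⟨∇Lᵢ(θᵢ), ψ - θ*⟩ through θᵢ:
the part along ψ - θᵢ is absorbed by Young's inequality, the part along θᵢ - θ* by strong convexity,
and every ‖∇Lᵢ(θᵢ)‖² that appears (once from Young, once from ‖g‖² via Jensen) is at most
2L (Lᵢ(θᵢ) - Lᵢ(θᵢ*)) by smoothness at the minimiser θᵢ*. A last Jensen step bounds
‖ψ - θ*‖² by the weighted mean of the ‖θᵢ - θ*‖².
-/

lemma sq_norm_sum_smul_le {E ι : Type*} [SeminormedAddCommGroup E] [NormedSpace ℝ E]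
    (s : Finset ι) {w : ι → ℝ} (hw₀ : ∀ i ∈ s, 0 ≤ w i) (hw₁ : ∑ i ∈ s, w i = 1) (v : ι → E) :
    ‖∑ i ∈ s, w i • v i‖ ^ 2 ≤ ∑ i ∈ s, w i * ‖v i‖ ^ 2 :=
  (convexOn_univ_norm.pow (fun _ _ => norm_nonneg _) 2).map_sum_le hw₀ hw₁
    fun _ _ => Set.mem_univ _

lemma sum_smul_sub_eq_sub {E ι : Type*} [AddCommGroup E] [Module ℝ E]
    (s : Finset ι) {w : ι → ℝ} (hw₁ : ∑ i ∈ s, w i = 1) (v : ι → E) (c : E) :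
    ∑ i ∈ s, w i • (v i - c) = ∑ i ∈ s, w i • v i - c := by
  simp only [smul_sub, Finset.sum_sub_distrib, ← Finset.sum_smul, hw₁, one_smul]

section InnerProductSpace

variable {F : Type*} [NormedAddCommGroup F] [InnerProductSpace ℝ F]

lemma sq_norm_le_of_quadratic_upper_bound {f : F → ℝ} {L : ℝ} (hL : 0 < L) {x v m : F}
    (hupper : ∀ y, f y ≤ f x + ⟪v, y - x⟫ + L / 2 * ‖y - x‖ ^ 2) (hmin : ∀ y, f m ≤ f y) :
    ‖v‖ ^ 2 ≤ 2 * L * (f x - f m) := by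
  have hstep : f (x - L⁻¹ • v) ≤ f x - ‖v‖ ^ 2 / (2 * L) := by
    have h := hupper (x - L⁻¹ • v)
    rw [sub_sub_cancel_left, inner_neg_right, real_inner_smul_right, real_inner_self_eq_norm_sq,
      norm_neg, norm_smul, Real.norm_of_nonneg (inv_nonneg.2 hL.le)] at h
    convert h using 1
    field_simp
    ring
  have : ‖v‖ ^ 2 / (2 * L) ≤ f x - f m := by linarith [(hmin _).trans hstep]
  rwa [div_le_iff₀ (by positivity), mul_comm] at this

lemma neg_two_mul_inner_le_of_quadratic_lower_bound {f : F → ℝ} {μ η : ℝ} (hη : 0 ≤ η)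
    {v x y : F} (hlower : f y ≥ f x + ⟪v, y - x⟫ + μ / 2 * ‖y - x‖ ^ 2) (p : F) :
    -(2 * η) * ⟪v, p - y⟫ ≤
      η ^ 2 * ‖v‖ ^ 2 + ‖p - x‖ ^ 2 - 2 * η * (f x - f y) - η * μ * ‖x - y‖ ^ 2 := by
  have hsplit : ⟪v, p - y⟫ = ⟪v, p - x⟫ - ⟪v, y - x⟫ := by
    rw [← inner_sub_right, sub_sub_sub_cancel_right]
  have hyoung : -(2 * η * ⟪v, p - x⟫) ≤ η ^ 2 * ‖v‖ ^ 2 + ‖p - x‖ ^ 2 := by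
    have hcs := (neg_le_abs _).trans (abs_real_inner_le_norm v (p - x))
    linarith [mul_le_mul_of_nonneg_left hcs (by positivity : 0 ≤ 2 * η),
      two_mul_le_add_sq (η * ‖v‖) ‖p - x‖]
  rw [norm_sub_rev x y, hsplit]
  linarith [mul_le_mul_of_nonneg_left hlower (by positivity : 0 ≤ 2 * η)]

end InnerProductSpace

theorem stmt5_general {d N : ℕ}
    (Lf : Fin N → EuclideanSpace ℝ (Fin d) → ℝ)
    (Lc μ : ℝ) (hμ : 0 < μ) (hμL : μ ≤ Lc)
    (hsmooth : ∀ i x y, Lf i y ≤ Lf i x + ⟪gradient (Lf i) x, y - x⟫ + Lc / 2 * ‖y - x‖ ^ 2)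
    (hconv : ∀ i x y, Lf i y ≥ Lf i x + ⟪gradient (Lf i) x, y - x⟫ + μ / 2 * ‖y - x‖ ^ 2)
    (w : Fin N → ℝ) (hw : ∀ i, w i ∈ Set.Ioo (0 : ℝ) 1) (hw1 : ∑ i, w i = 1)
    (θstar : EuclideanSpace ℝ (Fin d))
    (θistar : Fin N → EuclideanSpace ℝ (Fin d))
    (hθistar : ∀ i x, Lf i (θistar i) ≤ Lf i x)
    (θ : Fin N → EuclideanSpace ℝ (Fin d))
    (ψ g : EuclideanSpace ℝ (Fin d))
    (hψ : ψ = ∑ i, w i • θ i)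
    (hg : g = ∑ i, w i • gradient (Lf i) (θ i))
    (η : ℝ) (hη : 0 < η) :
    ‖ψ - η • g - θstar‖ ^ 2 ≤
      (1 - η * μ) * ‖ψ - θstar‖ ^ 2 + (∑ i, w i * ‖ψ - θ i‖ ^ 2)
        + 4 * η ^ 2 * Lc * (∑ i, w i * (Lf i (θ i) - Lf i (θistar i)))
        - 2 * η * ∑ i, w i * (Lf i (θ i) - Lf i θstar) := by
  have hw₀ : ∀ i ∈ Finset.univ, 0 ≤ w i := fun i _ => (hw i).1.le
  set v := fun i => gradient (Lf i) (θ i)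
  have hgrad i : ‖v i‖ ^ 2 ≤ 2 * Lc * (Lf i (θ i) - Lf i (θistar i)) :=
    sq_norm_le_of_quadratic_upper_bound (hμ.trans_le hμL) (hsmooth i (θ i)) (hθistar i)
  have hclient i : -(2 * η) * ⟪v i, ψ - θstar⟫ + η ^ 2 * ‖v i‖ ^ 2 ≤
      4 * η ^ 2 * Lc * (Lf i (θ i) - Lf i (θistar i)) + ‖ψ - θ i‖ ^ 2
        - 2 * η * (Lf i (θ i) - Lf i θstar) - η * μ * ‖θ i - θstar‖ ^ 2 := by
    have := neg_two_mul_inner_le_of_quadratic_lower_bound hη.le (hconv i (θ i) θstar) ψ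
    linarith [mul_le_mul_of_nonneg_left (hgrad i) (sq_nonneg η)]
  have hsum : -(2 * η) * ⟪g, ψ - θstar⟫ + η ^ 2 * ∑ i, w i * ‖v i‖ ^ 2 ≤
      4 * η ^ 2 * Lc * (∑ i, w i * (Lf i (θ i) - Lf i (θistar i))) + (∑ i, w i * ‖ψ - θ i‖ ^ 2)
        - 2 * η * (∑ i, w i * (Lf i (θ i) - Lf i θstar))
        - η * μ * ∑ i, w i * ‖θ i - θstar‖ ^ 2 := by
    rw [hg, sum_inner]
    simp only [real_inner_smul_left, Finset.mul_sum, ← Finset.sum_add_distrib,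
      ← Finset.sum_sub_distrib]
    refine Finset.sum_le_sum fun i hi => ?_
    linarith [mul_le_mul_of_nonneg_left (hclient i) (hw₀ i hi)]
  have hg_le : ‖g‖ ^ 2 ≤ ∑ i, w i * ‖v i‖ ^ 2 := hg ▸ sq_norm_sum_smul_le _ hw₀ hw1 v
  have hψ_le : ‖ψ - θstar‖ ^ 2 ≤ ∑ i, w i * ‖θ i - θstar‖ ^ 2 := by
    rw [hψ, ← sum_smul_sub_eq_sub _ hw1]
    exact sq_norm_sum_smul_le _ hw₀ hw1 _
  have hexpand : ‖ψ - η • g - θstar‖ ^ 2 =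
      ‖ψ - θstar‖ ^ 2 - 2 * η * ⟪g, ψ - θstar⟫ + η ^ 2 * ‖g‖ ^ 2 := by
    rw [sub_right_comm, norm_sub_sq_real, real_inner_smul_right, real_inner_comm, norm_smul,
      mul_pow, Real.norm_eq_abs, sq_abs]
    ring
  linarith [mul_le_mul_of_nonneg_left hψ_le (mul_nonneg hη.le hμ.le),
    mul_le_mul_of_nonneg_left hg_le (sq_nonneg η)]

/-- Intermediate one-step bound (eq. (29) in the paper's appendix). -/
theorem stmt5 {d N : ℕ} (hN : 1 ≤ N)
    (Lf : Fin N → EuclideanSpace ℝ (Fin d) → ℝ)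
    (Lc μ : ℝ) (hμ : 0 < μ) (hμL : μ ≤ Lc)
    (hdiff : ∀ i, Differentiable ℝ (Lf i))
    (hsmooth : ∀ i x y, Lf i y ≤ Lf i x + ⟪gradient (Lf i) x, y - x⟫ + Lc / 2 * ‖y - x‖ ^ 2)
    (hconv : ∀ i x y, Lf i y ≥ Lf i x + ⟪gradient (Lf i) x, y - x⟫ + μ / 2 * ‖y - x‖ ^ 2)
    (w : Fin N → ℝ) (hw : ∀ i, w i ∈ Set.Ioo (0 : ℝ) 1) (hw1 : ∑ i, w i = 1)
    (θstar : EuclideanSpace ℝ (Fin d))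
    (hθstar : ∀ x, ∑ i, w i * Lf i θstar ≤ ∑ i, w i * Lf i x)
    (θistar : Fin N → EuclideanSpace ℝ (Fin d))
    (hθistar : ∀ i x, Lf i (θistar i) ≤ Lf i x)
    (θ : Fin N → EuclideanSpace ℝ (Fin d))
    (ψ g : EuclideanSpace ℝ (Fin d))
    (hψ : ψ = ∑ i, w i • θ i)
    (hg : g = ∑ i, w i • gradient (Lf i) (θ i))
    (η : ℝ) (hη : 0 < η) (hη' : η ≤ 1 / (4 * Lc)) :
    ‖ψ - η • g - θstar‖ ^ 2 ≤
      (1 - η * μ) * ‖ψ - θstar‖ ^ 2 + (∑ i, w i * ‖ψ - θ i‖ ^ 2)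
        + 4 * η ^ 2 * Lc * (∑ i, w i * (Lf i (θ i) - Lf i (θistar i)))
        - 2 * η * ∑ i, w i * (Lf i (θ i) - Lf i θstar) :=
  stmt5_general Lf Lc μ hμ hμL hsmooth hconv w hw hw1 θstar θistar hθistar θ ψ g hψ hg η hη
end

section
/- Assume uniform weights w_i = 1/N with N ≥ 2 and 1 ≤ M ≤ N. Fix m ≥ 1 and a nonincreasing positive stepsize sequence (η_τ) with η_τ ≤ 2η_{τ+m} for all τ. Suppose all experts coincide at step t′ (θ_{i,t′} = ψ_{t′} for all i), evolve for t′ ≤ τ ≤ t by θ_{i,τ+1} = θ_{i,τ} − η_τ ∇L_i(θ_{i,τ}), with t + 1 − t′ ≤ m, and let S be a uniformly random M-element subset of {1,…,N}. With ρ_{t+1} = (1/M) Σ_{i∈S} θ_{i,t+1} and ψ_{t+1} = (1/N) Σ_{i=1}^N θ_{i,t+1}, it holds that E‖ρ_{t+1} − ψ_{t+1}‖² ≤ (4N/(M(N−1))) (1 − M/N) η_t² m² G². -/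
/-!
If `M` of `N` points are sampled without replacement, the squared distance between the sample
mean and the full mean averages to `(N - M) / (M N (N - 1))` times the spread `∑ ‖xᵢ - x̄‖²`:
expanding the square with `∑ᵢ (xᵢ - x̄) = 0`, only pairs split by the sample survive, and each
pair `i ≠ j` is split by `C(N-2, M-1)` samples. The spread is at most `∑ ‖xᵢ - ψ'‖²`, and each
expert is within `2 m η_t G` of the common start `ψ'`: it takes at most `m` steps, each of length
`η_τ ‖∇Lᵢ‖ ≤ 2 η_{τ+m} G ≤ 2 η_t G`.
-/

open Finset

variable {α : Type*} [Fintype α]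

theorem card_filter_powersetCard_mem_notMem [DecidableEq α] {i j : α} (hij : i ≠ j) {M : ℕ}
    (hM : 1 ≤ M) :
    #((univ.powersetCard M).filter fun S => i ∈ S ∧ j ∉ S) =
      (Fintype.card α - 2).choose (M - 1) := by
  have hfilter : ((univ.powersetCard M).filter fun S => i ∈ S ∧ j ∉ S) =
      ((univ.erase j).powersetCard M).filter ({i} ⊆ ·) := by
    ext S
    simp only [mem_filter, mem_powersetCard, subset_erase, singleton_subset_iff]
    simp only [subset_univ, true_and]
    tauto
  rw [hfilter, card_filter_powersetCard_subset _ _ _ (by simpa using hij) (by simpa using hM),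
    card_erase_of_mem (mem_univ j), card_univ, card_singleton, Nat.sub_sub]

theorem sum_sum_compl_eq_sum_sum_ite [DecidableEq α] {β : Type*} [AddCommMonoid β]
    (g : α → α → β) (S : Finset α) :
    ∑ i ∈ S, ∑ j ∈ Sᶜ, g i j = ∑ i, ∑ j, if i ∈ S ∧ j ∉ S then g i j else 0 := by
  simp_rw [ite_and, sum_ite_irrel, sum_const_zero, ← sum_filter, filter_notMem_eq_sdiff,
    compl_eq_univ_sdiff]
  simp

theorem Nat.mul_sub_mul_choose_eq {n M : ℕ} (hn : 2 ≤ n) (hM : 1 ≤ M) :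
    M * (n - M) * n.choose M = n * (n - 1) * (n - 2).choose (M - 1) := by
  have h₁ := Nat.add_one_mul_choose_eq (n - 1) (M - 1)
  have h₂ := Nat.choose_mul_succ_eq (n - 2) (M - 1)
  rw [Nat.sub_add_cancel (by omega), Nat.sub_add_cancel hM] at h₁
  rw [show n - 2 + 1 = n - 1 by omega, show n - 1 - (M - 1) = n - M by omega] at h₂
  calc M * (n - M) * n.choose M = (n - M) * (n * (n - 1).choose (M - 1)) := by rw [h₁]; ring
    _ = n * ((n - 2).choose (M - 1) * (n - 1)) := by rw [h₂]; ring
    _ = _ := by ring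

variable {E : Type*} [NormedAddCommGroup E] [InnerProductSpace ℝ E]

theorem norm_sum_sq_eq_neg_sum_inner_compl [DecidableEq α] {y : α → E} (hy : ∑ i, y i = 0)
    (S : Finset α) :
    ‖∑ i ∈ S, y i‖ ^ 2 = -∑ i ∈ S, ∑ j ∈ Sᶜ, inner ℝ (y i) (y j) := by
  have hcompl : ∑ j ∈ S, y j = -∑ j ∈ Sᶜ, y j := by
    rw [eq_neg_iff_add_eq_zero, sum_add_sum_compl, hy]
  rw [← real_inner_self_eq_norm_sq]
  nth_rewrite 2 [hcompl]
  simp_rw [inner_neg_right, sum_inner, inner_sum]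

theorem sum_powersetCard_norm_sum_sq [DecidableEq α] {y : α → E} (hy : ∑ i, y i = 0) {M : ℕ}
    (hM : 1 ≤ M) :
    ∑ S ∈ univ.powersetCard M, ‖∑ i ∈ S, y i‖ ^ 2 =
      ((Fintype.card α - 2).choose (M - 1) : ℝ) * ∑ i, ‖y i‖ ^ 2 := by
  set K : ℝ := (((Fintype.card α - 2).choose (M - 1) : ℕ) : ℝ)
  have hcount : ∀ i j : α,
      (#((univ.powersetCard M).filter fun S => i ∈ S ∧ j ∉ S) : ℝ) = if i = j then 0 else K := by
    intro i j
    split_ifs with hij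
    · simp [hij]
    · exact congrArg Nat.cast (card_filter_powersetCard_mem_notMem hij hM)
  calc ∑ S ∈ univ.powersetCard M, ‖∑ i ∈ S, y i‖ ^ 2
      = -∑ S ∈ univ.powersetCard M, ∑ i, ∑ j,
          if i ∈ S ∧ j ∉ S then inner ℝ (y i) (y j) else 0 := by
        simp_rw [norm_sum_sq_eq_neg_sum_inner_compl hy, sum_sum_compl_eq_sum_sum_ite,
          sum_neg_distrib]
    _ = -∑ i, ∑ j, (if i = j then 0 else K) * inner ℝ (y i) (y j) := by
        rw [sum_comm]
        congr 1
        refine sum_congr rfl fun i _ => ?_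
        rw [sum_comm]
        refine sum_congr rfl fun j _ => ?_
        rw [← sum_filter, sum_const, nsmul_eq_mul, hcount]
    _ = -∑ i, (K * inner ℝ (y i) (∑ j, y j) - K * ‖y i‖ ^ 2) := by
        congr 1
        refine sum_congr rfl fun i _ => ?_
        simp_rw [ite_mul, zero_mul, sum_ite, sum_const_zero, zero_add, inner_sum, mul_sum]
        rw [filter_ne, sum_erase_eq_sub (mem_univ i), real_inner_self_eq_norm_sq]
    _ = K * ∑ i, ‖y i‖ ^ 2 := by simp [hy, mul_sum]

theorem sum_sub_mean_eq_zero (x : α → E) :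
    ∑ i, (x i - (Fintype.card α : ℝ)⁻¹ • ∑ j, x j) = 0 := by
  rcases isEmpty_or_nonempty α with hα | hα
  · simp
  · rw [sum_sub_distrib, sum_const, card_univ, ← Nat.cast_smul_eq_nsmul ℝ, smul_smul,
      mul_inv_cancel₀ (by positivity), one_smul, sub_self]

theorem sum_norm_sub_mean_sq_le (x : α → E) (c : E) :
    ∑ i, ‖x i - (Fintype.card α : ℝ)⁻¹ • ∑ j, x j‖ ^ 2 ≤ ∑ i, ‖x i - c‖ ^ 2 := by
  set μ := (Fintype.card α : ℝ)⁻¹ • ∑ j, x j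
  have hsplit : ∑ i, ‖x i - c‖ ^ 2 = ∑ i, ‖x i - μ‖ ^ 2 +
      (2 * inner ℝ (∑ i, (x i - μ)) (μ - c) + Fintype.card α * ‖μ - c‖ ^ 2) := by
    simp_rw [sum_inner, mul_sum, ← card_univ, ← nsmul_eq_mul, ← sum_const, ← sum_add_distrib]
    refine sum_congr rfl fun i _ => ?_
    rw [← add_assoc, ← norm_add_sq_real, sub_add_sub_cancel]
  rw [hsplit, sum_sub_mean_eq_zero, inner_zero_left]
  nlinarith [sq_nonneg ‖μ - c‖, (Fintype.card α).cast_nonneg (α := ℝ)]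

theorem inv_card_mul_sum_powersetCard_norm_sub_mean_sq [DecidableEq α] (x : α → E) {M : ℕ}
    (hn : 2 ≤ Fintype.card α) (hM : 1 ≤ M) (hMn : M ≤ Fintype.card α) :
    (#((univ : Finset α).powersetCard M) : ℝ)⁻¹ * ∑ S ∈ univ.powersetCard M,
        ‖(M : ℝ)⁻¹ • ∑ i ∈ S, x i - (Fintype.card α : ℝ)⁻¹ • ∑ i, x i‖ ^ 2 =
      (Fintype.card α - M) / (M * Fintype.card α * (Fintype.card α - 1)) *
        ∑ i, ‖x i - (Fintype.card α : ℝ)⁻¹ • ∑ j, x j‖ ^ 2 := by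
  have hMpos : (0 : ℝ) < M := by exact_mod_cast hM
  have hsubsample : ∀ S ∈ (univ : Finset α).powersetCard M,
      ‖(M : ℝ)⁻¹ • ∑ i ∈ S, x i - (Fintype.card α : ℝ)⁻¹ • ∑ i, x i‖ ^ 2 =
        ((M : ℝ) ^ 2)⁻¹ * ‖∑ i ∈ S, (x i - (Fintype.card α : ℝ)⁻¹ • ∑ j, x j)‖ ^ 2 := by
    intro S hS
    have hsmul : (M : ℝ)⁻¹ • ∑ i ∈ S, x i - (Fintype.card α : ℝ)⁻¹ • ∑ i, x i =
        (M : ℝ)⁻¹ • ∑ i ∈ S, (x i - (Fintype.card α : ℝ)⁻¹ • ∑ j, x j) := by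
      rw [sum_sub_distrib, sum_const, (mem_powersetCard.mp hS).2, ← Nat.cast_smul_eq_nsmul ℝ,
        smul_sub, smul_smul, inv_mul_cancel₀ hMpos.ne', one_smul]
    rw [hsmul, norm_smul, mul_pow, Real.norm_of_nonneg (by positivity), inv_pow]
  rw [sum_congr rfl hsubsample, ← mul_sum,
    sum_powersetCard_norm_sum_sq (sum_sub_mean_eq_zero x) hM, card_powersetCard, card_univ,
    ← mul_assoc, ← mul_assoc]
  congr 1
  set n := Fintype.card α
  have hchoose := congrArg (Nat.cast : ℕ → ℝ) (Nat.mul_sub_mul_choose_eq hn hM)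
  push_cast [Nat.cast_sub hMn, Nat.cast_sub (by omega : 1 ≤ n)] at hchoose
  have hn1 : (n : ℝ) - 1 ≠ 0 := by
    have : (2 : ℝ) ≤ n := by exact_mod_cast hn
    linarith
  have hchoose_pos : (0 : ℝ) < n.choose M := by exact_mod_cast Nat.choose_pos hMn
  field_simp
  linear_combination -hchoose

theorem inv_card_mul_sum_powersetCard_norm_sub_mean_sq_le [DecidableEq α] {x : α → E} {c : E}
    {R : ℝ} (hx : ∀ i, ‖x i - c‖ ≤ R) {M : ℕ} (hn : 2 ≤ Fintype.card α) (hM : 1 ≤ M)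
    (hMn : M ≤ Fintype.card α) :
    (#((univ : Finset α).powersetCard M) : ℝ)⁻¹ * ∑ S ∈ univ.powersetCard M,
        ‖(M : ℝ)⁻¹ • ∑ i ∈ S, x i - (Fintype.card α : ℝ)⁻¹ • ∑ i, x i‖ ^ 2 ≤
      (Fintype.card α - M) / (M * (Fintype.card α - 1)) * R ^ 2 := by
  have hn' : (2 : ℝ) ≤ Fintype.card α := by exact_mod_cast hn
  have hMn' : (M : ℝ) ≤ Fintype.card α := by exact_mod_cast hMn
  have hspread : ∑ i, ‖x i - (Fintype.card α : ℝ)⁻¹ • ∑ j, x j‖ ^ 2 ≤ Fintype.card α * R ^ 2 :=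
    (sum_norm_sub_mean_sq_le x c).trans <| by
      simpa using sum_le_sum fun i (_ : i ∈ univ) =>
        pow_le_pow_left₀ (norm_nonneg _) (hx i) 2
  rw [inv_card_mul_sum_powersetCard_norm_sub_mean_sq x hn hM hMn]
  calc _ ≤ (Fintype.card α - M) / (M * Fintype.card α * (Fintype.card α - 1)) *
        (Fintype.card α * R ^ 2) := by
        gcongr
        exact div_nonneg (by linarith) (mul_nonneg (by positivity) (by linarith))
    _ = _ := by field_simp

theorem norm_sub_le_of_forall_step {F : Type*} [SeminormedAddCommGroup F] [NormedSpace ℝ F]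
    {u g : ℕ → F} {η : ℕ → ℝ} {a b : ℕ} {B G : ℝ} (hab : a ≤ b)
    (hu : ∀ τ, a ≤ τ → τ < b → u (τ + 1) = u τ - η τ • g τ)
    (hη : ∀ τ, a ≤ τ → τ < b → |η τ| ≤ B) (hg : ∀ τ, a ≤ τ → τ < b → ‖g τ‖ ≤ G) :
    ‖u b - u a‖ ≤ (b - a : ℕ) * (B * G) := by
  have h := dist_le_Ico_sum_of_dist_le (f := u) hab (d := fun _ => B * G) fun {τ} h₁ h₂ => by
    rw [hu τ h₁ h₂, dist_eq_norm, sub_sub_cancel, norm_smul, Real.norm_eq_abs]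
    exact mul_le_mul (hη τ h₁ h₂) (hg τ h₁ h₂) (norm_nonneg _)
      ((abs_nonneg _).trans (hη τ h₁ h₂))
  rwa [sum_const, Nat.card_Ico, nsmul_eq_mul, dist_comm, dist_eq_norm] at h

theorem stmt12_general {d N : ℕ} (hN : 2 ≤ N) (M : ℕ) (hM1 : 1 ≤ M) (hMN : M ≤ N)
    (Lf : Fin N → EuclideanSpace ℝ (Fin d) → ℝ)
    (G : ℝ) (hG : ∀ i x, ‖gradient (Lf i) x‖ ≤ G)
    (m : ℕ)
    (η : ℕ → ℝ) (hηpos : ∀ τ, 0 < η τ) (hηmono : ∀ τ₁ τ₂, τ₁ ≤ τ₂ → η τ₂ ≤ η τ₁)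
    (hη2 : ∀ τ, η τ ≤ 2 * η (τ + m))
    (θ : ℕ → Fin N → EuclideanSpace ℝ (Fin d))
    (t' t : ℕ) (ht't : t' ≤ t + 1) (htm : t + 1 - t' ≤ m)
    (ψ' : EuclideanSpace ℝ (Fin d)) (hcoincide : ∀ i, θ t' i = ψ')
    (hevol : ∀ τ, t' ≤ τ → τ ≤ t →
      ∀ i, θ (τ + 1) i = θ τ i - η τ • gradient (Lf i) (θ τ i)) :
    (((Finset.univ : Finset (Fin N)).powersetCard M).card : ℝ)⁻¹ *
        ∑ S ∈ (Finset.univ : Finset (Fin N)).powersetCard M,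
          ‖((M : ℝ)⁻¹ • ∑ i ∈ S, θ (t + 1) i) -
              (N : ℝ)⁻¹ • ∑ i, θ (t + 1) i‖ ^ 2
      ≤ 4 * (N : ℝ) / ((M : ℝ) * ((N : ℝ) - 1)) * (1 - (M : ℝ) / (N : ℝ)) *
          η t ^ 2 * (m : ℝ) ^ 2 * G ^ 2 := by
  have hGnn : 0 ≤ G := (norm_nonneg _).trans (hG ⟨0, by omega⟩ 0)
  have hηt : 0 ≤ 2 * η t := by linarith [hηpos t]
  have hstepsize : ∀ τ, t' ≤ τ → τ < t + 1 → |η τ| ≤ 2 * η t := fun τ hτ _ => by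
    rw [abs_of_pos (hηpos τ)]
    exact (hη2 τ).trans (by gcongr; exact hηmono _ _ (by omega))
  have hdrift : ∀ i, ‖θ (t + 1) i - ψ'‖ ≤ m * (2 * η t * G) := fun i => by
    have h := norm_sub_le_of_forall_step (u := (θ · i)) ht't
      (fun τ h₁ h₂ => hevol τ h₁ (by omega) i) hstepsize fun τ _ _ => hG i (θ τ i)
    rw [hcoincide] at h
    exact h.trans (by gcongr)
  have hvar := inv_card_mul_sum_powersetCard_norm_sub_mean_sq_le hdrift (by simpa using hN) hM1
    (by simpa using hMN)
  simp only [Fintype.card_fin] at hvar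
  refine hvar.trans_eq ?_
  field_simp
  ring

/-- Expected deviation of the subsampled merged parameter from the full average:
E‖ρ_{t+1} − ψ_{t+1}‖² ≤ (4N/(M(N−1)))(1 − M/N) η_t² m² G². -/
theorem stmt12 {d N : ℕ} (hN : 2 ≤ N) (M : ℕ) (hM1 : 1 ≤ M) (hMN : M ≤ N)
    (Lf : Fin N → EuclideanSpace ℝ (Fin d) → ℝ)
    (hdiff : ∀ i, Differentiable ℝ (Lf i))
    (G : ℝ) (hG : ∀ i x, ‖gradient (Lf i) x‖ ≤ G)
    (m : ℕ) (hm : 1 ≤ m)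
    (η : ℕ → ℝ) (hηpos : ∀ τ, 0 < η τ) (hηmono : ∀ τ₁ τ₂, τ₁ ≤ τ₂ → η τ₂ ≤ η τ₁)
    (hη2 : ∀ τ, η τ ≤ 2 * η (τ + m))
    (θ : ℕ → Fin N → EuclideanSpace ℝ (Fin d))
    (t' t : ℕ) (ht't : t' ≤ t + 1) (htm : t + 1 - t' ≤ m)
    (ψ' : EuclideanSpace ℝ (Fin d)) (hcoincide : ∀ i, θ t' i = ψ')
    (hevol : ∀ τ, t' ≤ τ → τ ≤ t →
      ∀ i, θ (τ + 1) i = θ τ i - η τ • gradient (Lf i) (θ τ i)) :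
    (((Finset.univ : Finset (Fin N)).powersetCard M).card : ℝ)⁻¹ *
        ∑ S ∈ (Finset.univ : Finset (Fin N)).powersetCard M,
          ‖((M : ℝ)⁻¹ • ∑ i ∈ S, θ (t + 1) i) -
              (N : ℝ)⁻¹ • ∑ i, θ (t + 1) i‖ ^ 2
      ≤ 4 * (N : ℝ) / ((M : ℝ) * ((N : ℝ) - 1)) * (1 - (M : ℝ) / (N : ℝ)) *
          η t ^ 2 * (m : ℝ) ^ 2 * G ^ 2 :=
  stmt12_general hN M hM1 hMN Lf G hG m η hηpos hηmono hη2 θ t' t ht't htm ψ' hcoincide hevol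
end

section
/- Let B ≥ 0, μ > 0, β > 1/μ, γ > 0, and let (d_t)_{t≥1} be a sequence of nonnegative reals satisfying βμ ≤ 1 + γ and, for all t ≥ 1, d_{t+1} ≤ (1 − βμ/(t+γ)) d_t + β²B/(t+γ)². Define v = max{ β²B/(βμ − 1), (γ+1) d_1 }. Then d_t ≤ v/(γ + t) for all t ≥ 1. -/
/-! The bound `v / (γ + t)` is propagated by induction on `t`: the choice
`v ≥ (γ + 1) d₁` starts it, and `v (c - 1) ≥ b` (with `c = βμ`, `b = β²B`) makes the
bound `v / a` at `a = t + γ` pass through one step of the recursion to `v / (a + 1)`,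
because `(a + 1) ((a - c) v + (c - 1) v) = (a² - 1) v ≤ a² v`. -/

theorem contraction_step_le {a c b v : ℝ} (ha : 0 < a) (hv : 0 ≤ v) (hbv : b ≤ v * (c - 1)) :
    (1 - c / a) * (v / a) + b / a ^ 2 ≤ v / (a + 1) := by
  rw [show (1 - c / a) * (v / a) + b / a ^ 2 = ((a - c) * v + b) / a ^ 2 by field_simp,
    div_le_div_iff₀ (by positivity) (by linarith)]
  nlinarith [mul_le_mul_of_nonneg_left hbv (by linarith : 0 ≤ a + 1)]

theorem le_div_of_le_one_sub_div_mul_add_div_sq {c b γ v : ℝ} {d : ℕ → ℝ}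
    (hc : 1 < c) (hcγ : c ≤ 1 + γ) (hv : 0 ≤ v) (hbv : b ≤ v * (c - 1))
    (hd₁ : (γ + 1) * d 1 ≤ v)
    (hrec : ∀ t : ℕ, 1 ≤ t → d (t + 1) ≤ (1 - c / ((t : ℝ) + γ)) * d t + b / ((t : ℝ) + γ) ^ 2) :
    ∀ t : ℕ, 1 ≤ t → d t ≤ v / (γ + (t : ℝ)) := by
  intro t ht
  induction t, ht using Nat.le_induction with
  | base =>
    rw [Nat.cast_one, le_div_iff₀ (by linarith)]
    linarith
  | succ t ht ih =>
    have hat : c ≤ (t : ℝ) + γ := by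
      have : (1 : ℝ) ≤ t := by exact_mod_cast ht
      linarith
    have hcoef : 0 ≤ 1 - c / ((t : ℝ) + γ) := by
      rw [sub_nonneg, div_le_one (by linarith)]
      exact hat
    rw [add_comm γ] at ih
    calc d (t + 1) ≤ (1 - c / ((t : ℝ) + γ)) * d t + b / ((t : ℝ) + γ) ^ 2 := hrec t ht
      _ ≤ (1 - c / ((t : ℝ) + γ)) * (v / ((t : ℝ) + γ)) + b / ((t : ℝ) + γ) ^ 2 := by
        gcongr
      _ ≤ v / ((t : ℝ) + γ + 1) := contraction_step_le (by linarith) hv hbv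
      _ = v / (γ + ((t + 1 : ℕ) : ℝ)) := by push_cast; ring_nf

theorem stmt15_general (B μ β γ : ℝ) (hB : 0 ≤ B) (hμ : 0 < μ) (hβ : 1 / μ < β)
    (hβμγ : β * μ ≤ 1 + γ)
    (d : ℕ → ℝ)
    (hrec : ∀ t : ℕ, 1 ≤ t →
      d (t + 1) ≤ (1 - β * μ / ((t : ℝ) + γ)) * d t + β ^ 2 * B / ((t : ℝ) + γ) ^ 2)
    (v : ℝ) (hv : v = max (β ^ 2 * B / (β * μ - 1)) ((γ + 1) * d 1)) :
    ∀ t : ℕ, 1 ≤ t → d t ≤ v / (γ + (t : ℝ)) := by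
  have hβμ : 1 < β * μ := by rwa [div_lt_iff₀ hμ] at hβ
  have hB_le : β ^ 2 * B / (β * μ - 1) ≤ v := hv ▸ le_max_left _ _
  have hv₀ : 0 ≤ v := le_trans (div_nonneg (by positivity) (by linarith)) hB_le
  refine le_div_of_le_one_sub_div_mul_add_div_sq hβμ hβμγ hv₀ ?_ (hv ▸ le_max_right _ _) hrec
  rwa [← div_le_iff₀ (by linarith)]

/-- Standard recursion lemma: if d_{t+1} ≤ (1 − βμ/(t+γ)) d_t + β²B/(t+γ)²,
then d_t ≤ v/(γ+t) with v = max{β²B/(βμ−1), (γ+1)d₁}. -/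
theorem stmt15 (B μ β γ : ℝ) (hB : 0 ≤ B) (hμ : 0 < μ) (hβ : 1 / μ < β)
    (hγ : 0 < γ) (hβμγ : β * μ ≤ 1 + γ)
    (d : ℕ → ℝ) (hd : ∀ t, 1 ≤ t → 0 ≤ d t)
    (hrec : ∀ t : ℕ, 1 ≤ t →
      d (t + 1) ≤ (1 - β * μ / ((t : ℝ) + γ)) * d t + β ^ 2 * B / ((t : ℝ) + γ) ^ 2)
    (v : ℝ) (hv : v = max (β ^ 2 * B / (β * μ - 1)) ((γ + 1) * d 1)) :
    ∀ t : ℕ, 1 ≤ t → d t ≤ v / (γ + (t : ℝ)) :=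
  stmt15_general B μ β γ hB hμ hβ hβμγ d hrec v hv
end

section
/- Let B ≥ 0, μ > 0, γ ≥ 1, set β = 2/μ, and let (d_t)_{t≥1} be a sequence of nonnegative reals satisfying, for all t ≥ 1, d_{t+1} ≤ (1 − 2/(t+γ)) d_t + 4B/(μ²(t+γ)²). Then for all t ≥ 1, d_t ≤ (1/(γ + t)) ( 4B/μ² + (γ+1) d_1 ). -/
/-!
Induction on `t` for the bound `d t ≤ C / (γ + t)`: with `a = t + γ`, the recursion turns the
bound at `t` into `(1 - 2/a) C/a + C/a² = C (a - 1)/a²`, which is at most `C/(a + 1)` because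
`(a - 1)(a + 1) ≤ a²`; the step needs the contraction factor `1 - 2/a` to be nonnegative.
-/

lemma one_sub_two_div_mul_div_add_div_sq_le {a C : ℝ} (ha : 0 < a) (hC : 0 ≤ C) :
    (1 - 2 / a) * (C / a) + C / a ^ 2 ≤ C / (a + 1) := by
  have hsimp : (1 - 2 / a) * (C / a) + C / a ^ 2 = C * (a - 1) / a ^ 2 := by
    field_simp
    ring
  rw [hsimp, div_le_div_iff₀ (by positivity) (by linarith)]
  nlinarith [mul_nonneg hC (sq_nonneg a)]

theorem le_div_of_contracting_recursion {c C γ : ℝ} (hγ : 1 ≤ γ) (hC : 0 ≤ C)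
    (hcC : c ≤ C) (d : ℕ → ℝ) (hd₁ : (γ + 1) * d 1 ≤ C)
    (hrec : ∀ t : ℕ, 1 ≤ t →
      d (t + 1) ≤ (1 - 2 / ((t : ℝ) + γ)) * d t + c / ((t : ℝ) + γ) ^ 2) :
    ∀ t : ℕ, 1 ≤ t → d t ≤ C / (γ + t) := by
  intro t ht
  induction t, ht using Nat.le_induction with
  | base =>
    rw [Nat.cast_one, le_div_iff₀ (by linarith), mul_comm]
    exact hd₁
  | succ t ht ih =>
    have ht' : (1 : ℝ) ≤ t := by exact_mod_cast ht
    have hfactor : 0 ≤ 1 - 2 / ((t : ℝ) + γ) := by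
      rw [sub_nonneg, div_le_one (by linarith)]
      linarith
    rw [add_comm γ] at ih
    calc d (t + 1) ≤ (1 - 2 / ((t : ℝ) + γ)) * d t + c / ((t : ℝ) + γ) ^ 2 := hrec t ht
      _ ≤ (1 - 2 / ((t : ℝ) + γ)) * (C / ((t : ℝ) + γ)) + C / ((t : ℝ) + γ) ^ 2 := by
          gcongr
      _ ≤ C / ((t : ℝ) + γ + 1) :=
          one_sub_two_div_mul_div_add_div_sq_le (by linarith) hC
      _ = C / (γ + ((t + 1 : ℕ) : ℝ)) := by push_cast; ring

theorem stmt16_general (B μ γ : ℝ) (hB : 0 ≤ B) (hγ : 1 ≤ γ)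
    (d : ℕ → ℝ) (hd : ∀ t, 1 ≤ t → 0 ≤ d t)
    (hrec : ∀ t : ℕ, 1 ≤ t →
      d (t + 1) ≤ (1 - 2 / ((t : ℝ) + γ)) * d t + 4 * B / (μ ^ 2 * ((t : ℝ) + γ) ^ 2)) :
    ∀ t : ℕ, 1 ≤ t →
      d t ≤ 1 / (γ + (t : ℝ)) * (4 * B / μ ^ 2 + (γ + 1) * d 1) := by
  have hc : 0 ≤ 4 * B / μ ^ 2 := by positivity
  have hd₁ : 0 ≤ (γ + 1) * d 1 := mul_nonneg (by linarith) (hd 1 le_rfl)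
  intro t ht
  rw [one_div_mul_eq_div]
  refine le_div_of_contracting_recursion hγ (add_nonneg hc hd₁) (le_add_of_nonneg_right hd₁)
    d (le_add_of_nonneg_left hc) (fun s hs => ?_) t ht
  simpa only [div_div] using hrec s hs

/-- Specialization of the recursion lemma with β = 2/μ:
d_t ≤ (1/(γ+t))(4B/μ² + (γ+1)d₁). -/
theorem stmt16 (B μ γ : ℝ) (hB : 0 ≤ B) (hμ : 0 < μ) (hγ : 1 ≤ γ)
    (d : ℕ → ℝ) (hd : ∀ t, 1 ≤ t → 0 ≤ d t)
    (hrec : ∀ t : ℕ, 1 ≤ t →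
      d (t + 1) ≤ (1 - 2 / ((t : ℝ) + γ)) * d t + 4 * B / (μ ^ 2 * ((t : ℝ) + γ) ^ 2)) :
    ∀ t : ℕ, 1 ≤ t →
      d t ≤ 1 / (γ + (t : ℝ)) * (4 * B / μ ^ 2 + (γ + 1) * d 1) :=
  stmt16_general B μ γ hB hγ d hd hrec
end
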